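/- Every minimal model of a Horn ℱ-program P is a derivable model of P. -/

import Mathlib

/-- An abstract-constraint clause: head constraint `hdC` over head set `hset`,
positive body literals `pos` and negated body literals `neg`, each a pair
(constraint, atom set). -/
structure ACClause (At : Type*) where
  hdC : Set (Set At)
  hset : Set At
  pos : List (Set (Set At) × Set At)
  neg : List (Set (Set At) × Set At)

/-- M ⊨ C(X) iff M ∩ X ∈ C. -/
def satAtom {At : Type*} (M : Set At) (A : Set (Set At) × Set At) : Prop :=
  M ∩ A.2 ∈ A.1

def satBody {At : Type*} (M : Set At) (r : ACClause At) : Prop :=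
  (∀ A ∈ r.pos, satAtom M A) ∧ (∀ A ∈ r.neg, ¬ satAtom M A)

def satHead {At : Type*} (M : Set At) (r : ACClause At) : Prop :=
  M ∩ r.hset ∈ r.hdC

/-- A constraint is monotone (upward closed). -/
def MonoC {At : Type*} (C : Set (Set At)) : Prop :=
  ∀ A A' : Set At, A ∈ C → A ⊆ A' → A' ∈ C

def MonoClause {At : Type*} (r : ACClause At) : Prop :=
  MonoC r.hdC ∧ (∀ A ∈ r.pos, MonoC A.1) ∧ (∀ A ∈ r.neg, MonoC A.1)

/-- All atom sets of a clause are finite. -/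
def FinClause {At : Type*} (r : ACClause At) : Prop :=
  r.hset.Finite ∧ (∀ A ∈ r.pos, A.2.Finite) ∧ (∀ A ∈ r.neg, A.2.Finite)

/-- The head constraint atom of `r` is consistent. -/
def ConsHead {At : Type*} (r : ACClause At) : Prop :=
  ∃ M : Set At, satHead M r

def Models {At : Type*} (M : Set At) (P : Set (ACClause At)) : Prop :=
  ∀ r ∈ P, satBody M r → satHead M r

/-- The M-applicable clauses P(M). -/
def appl {At : Type*} (P : Set (ACClause At)) (M : Set At) : Set (ACClause At) :=
  {r ∈ P | satBody M r}

/-- hset(P(M)): union of head sets of M-applicable clauses. -/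
def hsetP {At : Type*} (P : Set (ACClause At)) (M : Set At) : Set At :=
  ⋃ r ∈ appl P M, r.hset

/-- The nondeterministic one-step provability operator. -/
def Tnd {At : Type*} (P : Set (ACClause At)) (M : Set At) : Set (Set At) :=
  {M' | M' ⊆ hsetP P M ∧ ∀ r ∈ appl P M, satHead M' r}

/-- A monotone ℱ-program: all constraints monotone, all atom sets finite. -/
def MonoProg {At : Type*} (P : Set (ACClause At)) : Prop :=
  ∀ r ∈ P, MonoClause r ∧ FinClause r

/-- A Horn ℱ-program: monotone, finite atom sets, no negation. -/
def Horn {At : Type*} (P : Set (ACClause At)) : Prop :=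
  ∀ r ∈ P, r.neg = [] ∧ MonoClause r ∧ FinClause r

/-- A P-computation. -/
def IsComputation {At : Type*} (P : Set (ACClause At)) (t : ℕ → Set At) : Prop :=
  t 0 = ∅ ∧ ∀ n, t n ⊆ t (n + 1) ∧ t (n + 1) ∈ Tnd P (t n)

/-- M is a derivable model of P: the result of some P-computation. -/
def Derivable {At : Type*} (P : Set (ACClause At)) (M : Set At) : Prop :=
  ∃ t, IsComputation P t ∧ M = ⋃ n, t n

def stripNeg {At : Type*} (r : ACClause At) : ACClause At :=
  { r with neg := [] }

/-- The reduct P^M. -/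
def reduct {At : Type*} (P : Set (ACClause At)) (M : Set At) : Set (ACClause At) :=
  {r' | ∃ r ∈ P, (∀ A ∈ r.neg, ¬ satAtom M A) ∧ r' = stripNeg r}

/-- M is a stable model of P: M is a derivable model of the reduct P^M. -/
def Stable {At : Type*} (P : Set (ACClause At)) (M : Set At) : Prop :=
  Derivable (reduct P M) M

/-- The canonical P-computation with respect to M. -/
def canon {At : Type*} (P : Set (ACClause At)) (M : Set At) : ℕ → Set At
  | 0 => ∅
  | n + 1 => hsetP P (canon P M n) ∩ M

/-- A definite head: the head set is a minimal element of the head constraint. -/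
def DefHead {At : Type*} (r : ACClause At) : Prop :=
  r.hset ∈ r.hdC ∧ ∀ Y ∈ r.hdC, Y ⊆ r.hset → Y = r.hset

section Aux

variable {At : Type*}

lemma horn_body_mono {P : Set (ACClause At)} (hP : Horn P) {r : ACClause At}
    (hr : r ∈ P) {X Y : Set At} (hXY : X ⊆ Y) (hb : satBody X r) : satBody Y r := by
  obtain ⟨hneg, hmono, _⟩ := hP r hr
  refine ⟨fun A hA => ?_, fun A hA => by simp [hneg] at hA⟩
  exact hmono.2.1 A hA _ _ (hb.1 A hA) (Set.inter_subset_inter_left _ hXY)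

lemma appl_mono {P : Set (ACClause At)} (hP : Horn P) {X Y : Set At} (hXY : X ⊆ Y) :
    appl P X ⊆ appl P Y := by
  rintro r ⟨hr, hb⟩
  exact ⟨hr, horn_body_mono hP hr hXY hb⟩

lemma hsetP_mono {P : Set (ACClause At)} (hP : Horn P) {X Y : Set At} (hXY : X ⊆ Y) :
    hsetP P X ⊆ hsetP P Y := by
  intro x hx
  simp only [hsetP, Set.mem_iUnion] at hx ⊢
  obtain ⟨r, hr, hxr⟩ := hx
  exact ⟨r, appl_mono hP hXY hr, hxr⟩

lemma canon_subset (P : Set (ACClause At)) (M : Set At) : ∀ n, canon P M n ⊆ M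
  | 0 => by simp [canon]
  | n + 1 => Set.inter_subset_right

lemma canon_succ_mono {P : Set (ACClause At)} (hP : Horn P) (M : Set At) :
    ∀ n, canon P M n ⊆ canon P M (n + 1)
  | 0 => by simp [canon]
  | n + 1 => by
    show hsetP P (canon P M n) ∩ M ⊆ hsetP P (canon P M (n + 1)) ∩ M
    exact Set.inter_subset_inter_left _ (hsetP_mono hP (canon_succ_mono hP M n))

lemma canon_mono {P : Set (ACClause At)} (hP : Horn P) (M : Set At) :
    Monotone (canon P M) :=
  monotone_nat_of_le_succ (canon_succ_mono hP M)

lemma finite_subset_stage {t : ℕ → Set At} (ht : Monotone t) {F : Set At}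
    (hF : F.Finite) : F ⊆ (⋃ n, t n) → ∃ n, F ⊆ t n := by
  refine Set.Finite.induction_on (motive := fun F _ => F ⊆ (⋃ n, t n) → ∃ n, F ⊆ t n)
    F hF (fun _ => ⟨0, by simp⟩) ?_
  intro x s hx hs ih h
  obtain ⟨n, hn⟩ := ih ((Set.subset_insert _ _).trans h)
  obtain ⟨m, hm⟩ := Set.mem_iUnion.mp (h (Set.mem_insert _ _))
  exact ⟨max n m, Set.insert_subset (ht (le_max_right n m) hm)
    (hn.trans (ht (le_max_left n m)))⟩

end Aux

theorem stmt9 {At : Type*} (P : Set (ACClause At)) (hP : Horn P)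
    (M : Set At) (hM : Models M P)
    (hmin : ∀ M' : Set At, Models M' P → M' ⊆ M → M' = M) :
    Derivable P M := by
  set t := canon P M with ht
  have hmono := canon_mono hP M
  -- the canonical sequence is a computation
  have hcomp : IsComputation P t := by
    refine ⟨rfl, fun n => ⟨canon_succ_mono hP M n, Set.inter_subset_left, ?_⟩⟩
    rintro r hr
    obtain ⟨hrP, hb⟩ := hr
    have hbM : satBody M r := horn_body_mono hP hrP (canon_subset P M n) hb
    have hheadM : M ∩ r.hset ∈ r.hdC := hM r hrP hbM
    have hsub : r.hset ⊆ hsetP P (t n) := by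
      intro x hx
      simp only [hsetP, Set.mem_iUnion]
      exact ⟨r, ⟨hrP, hb⟩, hx⟩
    have heq : t (n + 1) ∩ r.hset = M ∩ r.hset := by
      show hsetP P (t n) ∩ M ∩ r.hset = M ∩ r.hset
      ext x
      constructor
      · rintro ⟨⟨_, hxM⟩, hxh⟩; exact ⟨hxM, hxh⟩
      · rintro ⟨hxM, hxh⟩; exact ⟨⟨hsub hxh, hxM⟩, hxh⟩
    show t (n + 1) ∩ r.hset ∈ r.hdC
    rw [heq]; exact hheadM
  set U := ⋃ n, t n with hU
  have hUM : U ⊆ M := Set.iUnion_subset (canon_subset P M)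
  -- U is a model of P
  have hUmod : Models U P := by
    intro r hrP hb
    obtain ⟨hneg, hmonoC, hfin⟩ := hP r hrP
    -- find a stage containing the relevant finite part of U
    have hFfin : (U ∩ {x | ∃ A ∈ r.pos, x ∈ A.2}).Finite := by
      apply Set.Finite.inter_of_right
      have : {x | ∃ A ∈ r.pos, x ∈ A.2} = ⋃ A ∈ {A | A ∈ r.pos}, A.2 := by
        ext x; simp
      rw [this]
      exact Set.Finite.biUnion r.pos.finite_toSet (fun A hA => hfin.2.1 A hA)
    obtain ⟨n, hn⟩ := finite_subset_stage hmono hFfin Set.inter_subset_left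
    have hbn : satBody (t n) r := by
      refine ⟨fun A hA => ?_, fun A hA => by simp [hneg] at hA⟩
      have h1 : U ∩ A.2 ∈ A.1 := hb.1 A hA
      have h2 : U ∩ A.2 ⊆ t n ∩ A.2 := by
        intro x hx
        exact ⟨hn ⟨hx.1, A, hA, hx.2⟩, hx.2⟩
      exact hmonoC.2.1 A hA _ _ h1 h2
    have hhead : satHead (t (n + 1)) r := (hcomp.2 n).2.2 r ⟨hrP, hbn⟩
    have hsubU : t (n + 1) ∩ r.hset ⊆ U ∩ r.hset :=
      Set.inter_subset_inter_left _ (Set.subset_iUnion t (n + 1))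
    exact hmonoC.1 _ _ hhead hsubU
  have : U = M := hmin U hUmod hUM
  exact ⟨t, hcomp, this.symm⟩
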